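/- In the Doi–Koppinen setting (H Hopf algebra with bijective antipode S, P right H-comodule algebra, C right H-module coalgebra with group-like e, ρ(p) = Σ p₍₀₎ ⊗ e·p₍₁₎ and λ(p) = Σ e·S⁻¹(p₍₁₎) ⊗ p₍₀₎, π: C → D a right H-linear coalgebra map, ē = π(e)), the right and left ē-coinvariants coincide: {a ∈ P | (id ⊗ π)∘ρ(a) = a ⊗ ē} = {a ∈ P | (π ⊗ id)∘λ(a) = ē ⊗ a}. -/

import Mathlib

/-!
For `x` in the right `H`-module `D`, the maps `Ψ(x ⊗ p) = Σ p₍₀₎ ⊗ x·p₍₁₎` and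
`Φ(p ⊗ x) = Σ x·S⁻¹(p₍₁₎) ⊗ p₍₀₎` are mutually inverse isomorphisms `D ⊗ P ≃ P ⊗ D`: by
coassociativity of `δ`, `Φ ∘ Ψ` and `Ψ ∘ Φ` collapse through `Σ h₍₂₎S⁻¹(h₍₁₎) = ε(h)` and
`Σ S⁻¹(h₍₂₎)h₍₁₎ = ε(h)`, which follow from the antipode axioms by applying the injective
antipode `S`. Since `π` is `H`-linear, `(id ⊗ π)ρ(a) = Ψ(ē ⊗ a)` and `(π ⊗ id)λ(a) = Φ(a ⊗ ē)`,
so `Ψ(ē ⊗ a) = a ⊗ ē` holds exactly when `Φ(a ⊗ ē) = ē ⊗ a`.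
-/

open TensorProduct

section

variable (k H C D P : Type) [Field k]
  [Ring H] [HopfAlgebra k H]
  [AddCommGroup C] [Module k C] [Coalgebra k C]
  [AddCommGroup D] [Module k D] [Coalgebra k D]
  [Ring P] [Algebra k P]

/-- The right `C`-coaction `ρ(p) = Σ p₍₀₎ ⊗ e·p₍₁₎`. -/
noncomputable def rhoDK (δ : P →ₗ[k] P ⊗[k] H) (act : C ⊗[k] H →ₗ[k] C) (e : C) :
    P →ₗ[k] P ⊗[k] C :=
  LinearMap.lTensor P (act ∘ₗ TensorProduct.mk k C H e) ∘ₗ δ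

/-- The left `C`-coaction `λ(p) = Σ e·S⁻¹(p₍₁₎) ⊗ p₍₀₎`. -/
noncomputable def lamDK (δ : P →ₗ[k] P ⊗[k] H) (act : C ⊗[k] H →ₗ[k] C)
    (Sinv : H →ₗ[k] H) (e : C) : P →ₗ[k] C ⊗[k] P :=
  LinearMap.rTensor P (act ∘ₗ TensorProduct.mk k C H e) ∘ₗ
    (TensorProduct.comm k P H).toLinearMap ∘ₗ
    LinearMap.lTensor P Sinv ∘ₗ δ

end

open Coalgebra HopfAlgebra LinearMap

section Comodule

variable {k H P : Type*} [CommSemiring k] [AddCommMonoid H] [Module k H] [Coalgebra k H]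
  [AddCommMonoid P] [Module k P]

structure IsRightComodule (δ : P →ₗ[k] P ⊗[k] H) : Prop where
  rid_lTensor_counit : ∀ p, TensorProduct.rid k P (lTensor P (counit (R := k) (A := H)) (δ p)) = p
  assoc_rTensor : ∀ p, TensorProduct.assoc k P H H (rTensor H δ (δ p)) = lTensor P comul (δ p)

theorem IsRightComodule.lTensor_comp_counit {M : Type*} [AddCommMonoid M] [Module k M]
    {δ : P →ₗ[k] P ⊗[k] H} (hδ : IsRightComodule δ) (f : k →ₗ[k] M) (p : P) :
    lTensor P (f ∘ₗ counit) (δ p) = p ⊗ₜ f 1 := by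
  have : lTensor P counit (δ p) = p ⊗ₜ (1 : k) :=
    (TensorProduct.rid k P).injective (by simpa using hδ.rid_lTensor_counit p)
  rw [lTensor_comp_apply, this, lTensor_tmul]

end Comodule

structure IsRightModule {k H D : Type*} [CommSemiring k] [Semiring H] [Module k H]
    [AddCommMonoid D] [Module k D] (act : D ⊗[k] H →ₗ[k] D) : Prop where
  act_one : ∀ d, act (d ⊗ₜ 1) = d
  act_mul : ∀ d h h', act (act (d ⊗ₜ h) ⊗ₜ h') = act (d ⊗ₜ (h * h'))

section InverseAntipode

variable {k H : Type*} [CommSemiring k] [Semiring H] [HopfAlgebra k H] {Sinv : H →ₗ[k] H}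

theorem mul'_comm_rTensor_comul_of_inverse (hl : Function.LeftInverse Sinv (antipode k))
    (hr : Function.RightInverse Sinv (antipode k)) (h : H) :
    mul' k H (TensorProduct.comm k H H (rTensor H Sinv (comul h))) = algebraMap k H (counit h) := by
  have key : antipode k ∘ₗ mul' k H ∘ₗ (TensorProduct.comm k H H).toLinearMap ∘ₗ rTensor H Sinv =
      mul' k H ∘ₗ lTensor H (antipode k) := by
    ext a b
    simp [antipode_mul_antidistrib, hr a]
  apply hl.injective
  calc antipode k (mul' k H (TensorProduct.comm k H H (rTensor H Sinv (comul h))))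
      = mul' k H (lTensor H (antipode k) (comul h)) := congr($key (comul h))
    _ = algebraMap k H (counit h) := mul_antipode_lTensor_comul_apply h
    _ = antipode k (algebraMap k H (counit h)) := by simp [Algebra.algebraMap_eq_smul_one]

theorem mul'_comm_lTensor_comul_of_inverse (hl : Function.LeftInverse Sinv (antipode k))
    (hr : Function.RightInverse Sinv (antipode k)) (h : H) :
    mul' k H (TensorProduct.comm k H H (lTensor H Sinv (comul h))) = algebraMap k H (counit h) := by
  have key : antipode k ∘ₗ mul' k H ∘ₗ (TensorProduct.comm k H H).toLinearMap ∘ₗ lTensor H Sinv =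
      mul' k H ∘ₗ rTensor H (antipode k) := by
    ext a b
    simp [antipode_mul_antidistrib, hr b]
  apply hl.injective
  calc antipode k (mul' k H (TensorProduct.comm k H H (lTensor H Sinv (comul h))))
      = mul' k H (rTensor H (antipode k) (comul h)) := congr($key (comul h))
    _ = algebraMap k H (counit h) := mul_antipode_rTensor_comul_apply h
    _ = antipode k (algebraMap k H (counit h)) := by simp [Algebra.algebraMap_eq_smul_one]

end InverseAntipode

section Entwining

variable {k H P D : Type*} [CommSemiring k] [AddCommMonoid P] [Module k P]
  [AddCommMonoid D] [Module k D]

section Definitions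

variable [AddCommMonoid H] [Module k H]
  (δ : P →ₗ[k] P ⊗[k] H) (act : D ⊗[k] H →ₗ[k] D) (Sinv : H →ₗ[k] H)

noncomputable def entwining : D ⊗[k] P →ₗ[k] P ⊗[k] D :=
  TensorProduct.lift <|
    lcomp k (P ⊗[k] D) δ ∘ₗ lTensorHom P ∘ₗ (TensorProduct.mk k D H).compr₂ act

noncomputable def entwiningInv : P ⊗[k] D →ₗ[k] D ⊗[k] P :=
  TensorProduct.lift <| LinearMap.flip <|
    lcomp k (D ⊗[k] P) ((TensorProduct.comm k P H).toLinearMap ∘ₗ δ) ∘ₗ rTensorHom P ∘ₗ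
      lcomp k D Sinv ∘ₗ (TensorProduct.mk k D H).compr₂ act

@[simp]
theorem entwining_tmul (x : D) (p : P) :
    entwining δ act (x ⊗ₜ p) = lTensor P (act ∘ₗ TensorProduct.mk k D H x) (δ p) := rfl

@[simp]
theorem entwiningInv_tmul (p : P) (x : D) :
    entwiningInv δ act Sinv (p ⊗ₜ x) =
      rTensor P (act ∘ₗ TensorProduct.mk k D H x ∘ₗ Sinv) (TensorProduct.comm k P H (δ p)) := rfl

end Definitions

section Algebra

variable [Semiring H] [Algebra k H]
  {δ : P →ₗ[k] P ⊗[k] H} {act : D ⊗[k] H →ₗ[k] D} {Sinv : H →ₗ[k] H}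

theorem entwiningInv_lTensor (hact : IsRightModule act) (x : D) (t : P ⊗[k] H) :
    entwiningInv δ act Sinv (lTensor P (act ∘ₗ TensorProduct.mk k D H x) t) =
      TensorProduct.comm k P D (lTensor P (act ∘ₗ TensorProduct.mk k D H x ∘ₗ mul' k H ∘ₗ
        (TensorProduct.comm k H H).toLinearMap ∘ₗ rTensor H Sinv)
          (TensorProduct.assoc k P H H (rTensor H δ t))) := by
  induction t using TensorProduct.induction_on with
  | zero => simp
  | add t t' ht ht' => simp only [map_add, ht, ht']
  | tmul q h =>
    simp only [lTensor_tmul, rTensor_tmul, entwiningInv_tmul]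
    induction δ q using TensorProduct.induction_on with
    | zero => simp
    | add y y' hy hy' => simp only [map_add, TensorProduct.add_tmul, hy, hy']
    | tmul q' h' => simp [hact.act_mul]

theorem entwining_rTensor (hact : IsRightModule act) (x : D) (t : P ⊗[k] H) :
    entwining δ act (rTensor P (act ∘ₗ TensorProduct.mk k D H x ∘ₗ Sinv)
        (TensorProduct.comm k P H t)) =
      lTensor P (act ∘ₗ TensorProduct.mk k D H x ∘ₗ mul' k H ∘ₗ
        (TensorProduct.comm k H H).toLinearMap ∘ₗ lTensor H Sinv)
          (TensorProduct.assoc k P H H (rTensor H δ t)) := by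
  induction t using TensorProduct.induction_on with
  | zero => simp
  | add t t' ht ht' => simp only [map_add, ht, ht']
  | tmul q h =>
    simp only [TensorProduct.comm_tmul, rTensor_tmul, entwining_tmul]
    induction δ q using TensorProduct.induction_on with
    | zero => simp
    | add y y' hy hy' => simp only [map_add, TensorProduct.add_tmul, hy, hy']
    | tmul q' h' => simp [hact.act_mul]

end Algebra

section Hopf

variable [Semiring H] [HopfAlgebra k H]
  {δ : P →ₗ[k] P ⊗[k] H} {act : D ⊗[k] H →ₗ[k] D} {Sinv : H →ₗ[k] H}

theorem entwiningInv_comp_entwining (hδ : IsRightComodule δ) (hact : IsRightModule act)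
    (hl : Function.LeftInverse Sinv (antipode k)) (hr : Function.RightInverse Sinv (antipode k)) :
    entwiningInv δ act Sinv ∘ₗ entwining δ act = LinearMap.id := by
  refine TensorProduct.ext' fun x p => ?_
  have hcounit : act ∘ₗ TensorProduct.mk k D H x ∘ₗ mul' k H ∘ₗ
      (TensorProduct.comm k H H).toLinearMap ∘ₗ rTensor H Sinv ∘ₗ comul =
        toSpanSingleton k D x ∘ₗ counit := by
    ext h
    simp [mul'_comm_rTensor_comul_of_inverse hl hr, Algebra.algebraMap_eq_smul_one, hact.act_one]
  calc entwiningInv δ act Sinv (lTensor P (act ∘ₗ TensorProduct.mk k D H x) (δ p))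
      = TensorProduct.comm k P D (lTensor P (toSpanSingleton k D x ∘ₗ counit) (δ p)) := by
        rw [entwiningInv_lTensor hact, hδ.assoc_rTensor, ← lTensor_comp_apply, ← hcounit]
        rfl
    _ = x ⊗ₜ p := by simp [hδ.lTensor_comp_counit]

theorem entwining_comp_entwiningInv (hδ : IsRightComodule δ) (hact : IsRightModule act)
    (hl : Function.LeftInverse Sinv (antipode k)) (hr : Function.RightInverse Sinv (antipode k)) :
    entwining δ act ∘ₗ entwiningInv δ act Sinv = LinearMap.id := by
  refine TensorProduct.ext' fun p x => ?_
  have hcounit : act ∘ₗ TensorProduct.mk k D H x ∘ₗ mul' k H ∘ₗ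
      (TensorProduct.comm k H H).toLinearMap ∘ₗ lTensor H Sinv ∘ₗ comul =
        toSpanSingleton k D x ∘ₗ counit := by
    ext h
    simp [mul'_comm_lTensor_comul_of_inverse hl hr, Algebra.algebraMap_eq_smul_one, hact.act_one]
  calc entwining δ act (rTensor P (act ∘ₗ TensorProduct.mk k D H x ∘ₗ Sinv)
        (TensorProduct.comm k P H (δ p)))
      = lTensor P (toSpanSingleton k D x ∘ₗ counit) (δ p) := by
        rw [entwining_rTensor hact, hδ.assoc_rTensor, ← lTensor_comp_apply, ← hcounit]
        rfl
    _ = p ⊗ₜ x := by simp [hδ.lTensor_comp_counit]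

noncomputable def entwiningEquiv (hδ : IsRightComodule δ) (hact : IsRightModule act)
    (hl : Function.LeftInverse Sinv (antipode k)) (hr : Function.RightInverse Sinv (antipode k)) :
    D ⊗[k] P ≃ₗ[k] P ⊗[k] D :=
  LinearEquiv.ofLinearMap (entwining δ act) (entwiningInv δ act Sinv)
    (entwining_comp_entwiningInv hδ hact hl hr) (entwiningInv_comp_entwining hδ hact hl hr)

theorem lTensor_eq_tmul_iff_rTensor_eq_tmul (hδ : IsRightComodule δ) (hact : IsRightModule act)
    (hl : Function.LeftInverse Sinv (antipode k)) (hr : Function.RightInverse Sinv (antipode k))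
    (x : D) (a : P) :
    lTensor P (act ∘ₗ TensorProduct.mk k D H x) (δ a) = a ⊗ₜ x ↔
      rTensor P (act ∘ₗ TensorProduct.mk k D H x ∘ₗ Sinv) (TensorProduct.comm k P H (δ a)) =
        x ⊗ₜ a :=
  ((entwiningEquiv hδ hact hl hr).eq_symm_apply (x := a ⊗ₜ x) (y := x ⊗ₜ a)).symm.trans eq_comm

end Hopf

end Entwining

section DoiKoppinen

variable {k H C D P : Type} [Field k] [Ring H] [HopfAlgebra k H]
  [AddCommGroup C] [Module k C] [AddCommGroup D] [Module k D] [Ring P] [Algebra k P]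
  {δ : P →ₗ[k] P ⊗[k] H} {act : C ⊗[k] H →ₗ[k] C} {actD : D ⊗[k] H →ₗ[k] D} {π : C →ₗ[k] D}

theorem lTensor_comp_rhoDK (hπH : ∀ c h, π (act (c ⊗ₜ[k] h)) = actD (π c ⊗ₜ[k] h)) (e : C) :
    lTensor P π ∘ₗ rhoDK k H C P δ act e =
      lTensor P (actD ∘ₗ TensorProduct.mk k D H (π e)) ∘ₗ δ := by
  have hπe : π ∘ₗ act ∘ₗ TensorProduct.mk k C H e = actD ∘ₗ TensorProduct.mk k D H (π e) := by
    ext h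
    exact hπH e h
  rw [rhoDK, ← LinearMap.comp_assoc, ← lTensor_comp, hπe]

theorem rTensor_comp_lamDK (hπH : ∀ c h, π (act (c ⊗ₜ[k] h)) = actD (π c ⊗ₜ[k] h))
    (Sinv : H →ₗ[k] H) (e : C) :
    rTensor P π ∘ₗ lamDK k H C P δ act Sinv e =
      rTensor P (actD ∘ₗ TensorProduct.mk k D H (π e) ∘ₗ Sinv) ∘ₗ
        (TensorProduct.comm k P H).toLinearMap ∘ₗ δ := by
  have key : rTensor P π ∘ₗ rTensor P (act ∘ₗ TensorProduct.mk k C H e) ∘ₗ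
      (TensorProduct.comm k P H).toLinearMap ∘ₗ lTensor P Sinv =
        rTensor P (actD ∘ₗ TensorProduct.mk k D H (π e) ∘ₗ Sinv) ∘ₗ
          (TensorProduct.comm k P H).toLinearMap :=
    TensorProduct.ext' fun p h => by simp [hπH]
  simp only [lamDK, ← LinearMap.comp_assoc] at key ⊢
  rw [key]

end DoiKoppinen

variable (k H C D P : Type) [Field k]
  [Ring H] [HopfAlgebra k H]
  [AddCommGroup C] [Module k C] [Coalgebra k C]
  [AddCommGroup D] [Module k D] [Coalgebra k D]
  [Ring P] [Algebra k P]

theorem stmt14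
    (δ : P →ₗ[k] P ⊗[k] H)
    (hδcounit : ∀ p : P,
      TensorProduct.rid k P
        (LinearMap.lTensor P (Coalgebra.counit (R := k) (A := H)) (δ p)) = p)
    (hδcoassoc : ∀ p : P,
      TensorProduct.assoc k P H H (LinearMap.rTensor H δ (δ p)) =
        LinearMap.lTensor P (Coalgebra.comul (R := k) (A := H)) (δ p))
    (act : C ⊗[k] H →ₗ[k] C)
    (Sinv : H →ₗ[k] H)
    (hS1 : ∀ h : H, Sinv (HopfAlgebra.antipode (R := k) h) = h)
    (hS2 : ∀ h : H, HopfAlgebra.antipode (R := k) (Sinv h) = h)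
    (actD : D ⊗[k] H →ₗ[k] D)
    (hactD_one : ∀ d : D, actD (d ⊗ₜ[k] (1 : H)) = d)
    (hactD_mul : ∀ (d : D) (h h' : H),
      actD (actD (d ⊗ₜ[k] h) ⊗ₜ[k] h') = actD (d ⊗ₜ[k] (h * h')))
    (π : C →ₗ[k] D)
    (hπH : ∀ (c : C) (h : H), π (act (c ⊗ₜ[k] h)) = actD ((π c) ⊗ₜ[k] h))
    (e : C) :
    {a : P | LinearMap.lTensor P π (rhoDK k H C P δ act e a) = a ⊗ₜ[k] (π e)} =
    {a : P | LinearMap.rTensor P π (lamDK k H C P δ act Sinv e a) = (π e) ⊗ₜ[k] a} := by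
  ext a
  simp only [Set.mem_ofPred_eq, ← LinearMap.comp_apply, lTensor_comp_rhoDK hπH,
    rTensor_comp_lamDK hπH]
  exact lTensor_eq_tmul_iff_rTensor_eq_tmul ⟨hδcounit, hδcoassoc⟩ ⟨hactD_one, hactD_mul⟩
    hS1 hS2 (π e) a
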